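/- arXiv:2209.14561 — 2 statements merged into one kernel-verified Lean document; each statement's English description precedes it below -/
import Mathlib

section
/- Let $p,q:(a,b)\to\mathbb{R}$ be differentiable and let $u,v:(a,b)\to\mathbb{R}$ be twice differentiable solutions of $y''(t)+p(t)y'(t)+q(t)y(t)=0$ on $(a,b)$. Then the modulus function $m(t)=(u(t))^2+(v(t))^2$ is three times differentiable and satisfies Appell's equation $m'''(t)+3p(t)m''(t)+\big(2(p(t))^2+p'(t)+4q(t)\big)m'(t)+\big(4p(t)q(t)+2q'(t)\big)m(t)=0$ for all $t\in(a,b)$. -/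
/-!
Appell's equation is linear, so it suffices to check it for `y ^ 2` with `y` a single
solution of `y'' + p y' + q y = 0`. Using the equation to eliminate `y''`, the derivatives
of `w = y ^ 2` are `w' = 2 y y'`, `w'' = 2 y'² - 2 p y y' - 2 q y²` and `w'''` is the derivative
of the latter; substituting these into Appell's equation gives a polynomial identity.
-/

open Set Filter Topology

def AppellOn (p q w : ℝ → ℝ) (s : Set ℝ) : Prop :=
  ∀ t ∈ s,
    (DifferentiableAt ℝ w t ∧ DifferentiableAt ℝ (deriv w) t ∧
      DifferentiableAt ℝ (deriv (deriv w)) t) ∧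
    deriv (deriv (deriv w)) t + 3 * p t * deriv (deriv w) t
      + (2 * (p t) ^ 2 + deriv p t + 4 * q t) * deriv w t
      + (4 * p t * q t + 2 * deriv q t) * w t = 0

section Appell

variable {p q w₁ w₂ y : ℝ → ℝ} {s : Set ℝ}

theorem AppellOn.add (hs : IsOpen s) (h₁ : AppellOn p q w₁ s) (h₂ : AppellOn p q w₂ s) :
    AppellOn p q (w₁ + w₂) s := by
  intro t ht
  have hnhds : ∀ᶠ x in 𝓝 t, x ∈ s := hs.mem_nhds ht
  obtain ⟨⟨hw₁, hw₁', hw₁''⟩, heq₁⟩ := h₁ t ht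
  obtain ⟨⟨hw₂, hw₂', hw₂''⟩, heq₂⟩ := h₂ t ht
  have e1 : deriv (w₁ + w₂) =ᶠ[𝓝 t] deriv w₁ + deriv w₂ := by
    filter_upwards [hnhds] with x hx
    exact deriv_add (h₁ x hx).1.1 (h₂ x hx).1.1
  have e2 : deriv (deriv (w₁ + w₂)) =ᶠ[𝓝 t] deriv (deriv w₁) + deriv (deriv w₂) := by
    refine e1.deriv.trans ?_
    filter_upwards [hnhds] with x hx
    exact deriv_add (h₁ x hx).1.2.1 (h₂ x hx).1.2.1
  refine ⟨⟨hw₁.add hw₂, (hw₁'.add hw₂').congr_of_eventuallyEq e1,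
    (hw₁''.add hw₂'').congr_of_eventuallyEq e2⟩, ?_⟩
  rw [e2.deriv_eq, deriv_add hw₁'' hw₂'', e2.eq_of_nhds, e1.eq_of_nhds]
  simp only [Pi.add_apply]
  linear_combination heq₁ + heq₂

theorem appellOn_sq (hs : IsOpen s)
    (hp : ∀ t ∈ s, DifferentiableAt ℝ p t) (hq : ∀ t ∈ s, DifferentiableAt ℝ q t)
    (hy : ∀ t ∈ s, DifferentiableAt ℝ y t) (hy' : ∀ t ∈ s, DifferentiableAt ℝ (deriv y) t)
    (hye : ∀ t ∈ s, deriv (deriv y) t + p t * deriv y t + q t * y t = 0) :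
    AppellOn p q (fun t => y t ^ 2) s := by
  have h1 : ∀ t ∈ s, HasDerivAt (fun t => y t ^ 2) (2 * y t * deriv y t) t := fun t ht =>
    ((hy t ht).hasDerivAt.fun_pow 2).congr_deriv (by ring)
  have h2 : ∀ t ∈ s, HasDerivAt (fun t => 2 * y t * deriv y t)
      (2 * deriv y t ^ 2 - 2 * p t * y t * deriv y t - 2 * q t * y t ^ 2) t := fun t ht =>
    (((hy t ht).hasDerivAt.const_mul 2).fun_mul (hy' t ht).hasDerivAt).congr_deriv
      (by linear_combination (2 * y t) * hye t ht)
  intro t ht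
  have hnhds : ∀ᶠ x in 𝓝 t, x ∈ s := hs.mem_nhds ht
  have e1 : deriv (fun t => y t ^ 2) =ᶠ[𝓝 t] fun t => 2 * y t * deriv y t := by
    filter_upwards [hnhds] with x hx using (h1 x hx).deriv
  have e2 : deriv (deriv (fun t => y t ^ 2)) =ᶠ[𝓝 t]
      fun t => 2 * deriv y t ^ 2 - 2 * p t * y t * deriv y t - 2 * q t * y t ^ 2 := by
    refine e1.deriv.trans ?_
    filter_upwards [hnhds] with x hx using (h2 x hx).deriv
  have hy₀ := (hy t ht).hasDerivAt
  have hy₁ := (hy' t ht).hasDerivAt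
  have h3 : HasDerivAt
      (fun t => 2 * deriv y t ^ 2 - 2 * p t * y t * deriv y t - 2 * q t * y t ^ 2)
      (4 * deriv y t * deriv (deriv y) t
        - 2 * (deriv p t * y t * deriv y t + p t * deriv y t ^ 2 + p t * y t * deriv (deriv y) t)
        - 2 * (deriv q t * y t ^ 2 + 2 * q t * y t * deriv y t)) t :=
    ((((hy₁.fun_pow 2).const_mul 2).fun_sub
      ((((hp t ht).hasDerivAt.const_mul 2).fun_mul hy₀).fun_mul hy₁)).fun_sub
      (((hq t ht).hasDerivAt.const_mul 2).fun_mul (hy₀.fun_pow 2))).congr_deriv (by ring)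
  refine ⟨⟨(h1 t ht).differentiableAt, (h2 t ht).differentiableAt.congr_of_eventuallyEq e1,
    h3.differentiableAt.congr_of_eventuallyEq e2⟩, ?_⟩
  have hy'' : deriv (deriv y) t = -(p t * deriv y t + q t * y t) := by
    linear_combination hye t ht
  rw [e2.deriv_eq, h3.deriv, e2.eq_of_nhds, e1.eq_of_nhds, hy'']
  ring

end Appell

/-- If `u` and `v` are twice differentiable solutions of
`y'' + p y' + q y = 0` on `(a,b)` (with `p`, `q` differentiable), then the modulus function `m = u² + v²`
is three times differentiable and satisfies Appell's equation
`m''' + 3 p m'' + (2 p² + p' + 4 q) m' + (4 p q + 2 q') m = 0` on `(a,b)`. -/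
theorem stmt_3 (a b : ℝ) (p q u v : ℝ → ℝ)
    (hp : ∀ t ∈ Ioo a b, DifferentiableAt ℝ p t)
    (hq : ∀ t ∈ Ioo a b, DifferentiableAt ℝ q t)
    (hu : ∀ t ∈ Ioo a b, DifferentiableAt ℝ u t)
    (hu' : ∀ t ∈ Ioo a b, DifferentiableAt ℝ (deriv u) t)
    (hv : ∀ t ∈ Ioo a b, DifferentiableAt ℝ v t)
    (hv' : ∀ t ∈ Ioo a b, DifferentiableAt ℝ (deriv v) t)
    (hue : ∀ t ∈ Ioo a b, deriv (deriv u) t + p t * deriv u t + q t * u t = 0)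
    (hve : ∀ t ∈ Ioo a b, deriv (deriv v) t + p t * deriv v t + q t * v t = 0)
    (m : ℝ → ℝ) (hm : m = fun t => (u t) ^ 2 + (v t) ^ 2) :
    ∀ t ∈ Ioo a b,
      (DifferentiableAt ℝ m t ∧ DifferentiableAt ℝ (deriv m) t ∧
        DifferentiableAt ℝ (deriv (deriv m)) t) ∧
      deriv (deriv (deriv m)) t + 3 * p t * deriv (deriv m) t
        + (2 * (p t) ^ 2 + deriv p t + 4 * q t) * deriv m t
        + (4 * p t * q t + 2 * deriv q t) * m t = 0 := by
  subst hm
  exact (appellOn_sq isOpen_Ioo hp hq hu hu' hue).add isOpen_Ioo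
    (appellOn_sq isOpen_Ioo hp hq hv hv' hve)
end

section
/- Let $p,q:(a,b)\to\mathbb{R}$ be continuously differentiable, and let $u,v:(a,b)\to\mathbb{R}$ be solutions of $y''(t)+p(t)y'(t)+q(t)y(t)=0$ on $(a,b)$ whose Wronskian $\omega(t)=u(t)v'(t)-u'(t)v(t)$ is nonzero on $(a,b)$ and whose modulus function $m(t)=(u(t))^2+(v(t))^2$ is nonzero on $(a,b)$. Then the function $\alpha'(t)=\omega(t)/\big((u(t))^2+(v(t))^2\big)$ is twice differentiable and satisfies Kummer's equation, i.e., $q(t)-\tfrac{(p(t))^2}{4}-\tfrac{p'(t)}{2}-(\alpha'(t))^2+\tfrac{3}{4}\left(\tfrac{\alpha''(t)}{\alpha'(t)}\right)^2-\tfrac{\alpha'''(t)}{2\alpha'(t)}=0$ for all $t\in(a,b)$, where $\alpha''$ and $\alpha'''$ denote the first and second derivatives of the function $\alpha'$. -/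
/-!
Writing `W = u v' - u' v`, `m = u² + v²` and `n = u u' + v v'`, the equation gives `W' = -p W`
and `m' = 2 n`, so `α' = W / m` has logarithmic derivative `L = -p - 2 n / m`. Then
`α'' / α' = L` and `α''' / α' = L² + L'`, which reduces Kummer's expression to
`q - p²/4 - p'/2 - α'² + L²/4 - L'/2`. Expanding `L'` with the equation for `u''` and `v''`,
this equals `(u'² + v'²) / m - (W² + n²) / m²`, which vanishes by Lagrange's identity
`W² + n² = m (u'² + v'²)`.
-/

open Real Set Filter Topology

noncomputable def wronskian (u v : ℝ → ℝ) (t : ℝ) : ℝ := u t * deriv v t - deriv u t * v t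

def modulus (u v : ℝ → ℝ) (t : ℝ) : ℝ := u t ^ 2 + v t ^ 2

noncomputable def modulusHalfDeriv (u v : ℝ → ℝ) (t : ℝ) : ℝ :=
  u t * deriv u t + v t * deriv v t

theorem hasDerivAt_deriv_of_eventually_hasDerivAt_mul {f L : ℝ → ℝ} {L' t : ℝ}
    (hf : ∀ᶠ x in 𝓝 t, HasDerivAt f (f x * L x) x) (hL : HasDerivAt L L' t) :
    HasDerivAt (deriv f) (f t * (L t ^ 2 + L')) t := by
  have hderiv : deriv f =ᶠ[𝓝 t] f * L := hf.mono fun x hx => hx.deriv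
  exact ((hf.self_of_nhds.mul hL).congr_of_eventuallyEq hderiv).congr_deriv (by ring)

section SecondOrderODE

variable {p q u v : ℝ → ℝ} {t : ℝ}

theorem hasDerivAt_wronskian
    (hu : DifferentiableAt ℝ u t) (hu' : DifferentiableAt ℝ (deriv u) t)
    (hv : DifferentiableAt ℝ v t) (hv' : DifferentiableAt ℝ (deriv v) t)
    (hue : deriv (deriv u) t + p t * deriv u t + q t * u t = 0)
    (hve : deriv (deriv v) t + p t * deriv v t + q t * v t = 0) :
    HasDerivAt (wronskian u v) (-p t * wronskian u v t) t := by
  refine ((hu.hasDerivAt.mul hv'.hasDerivAt).sub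
    (hu'.hasDerivAt.mul hv.hasDerivAt)).congr_deriv ?_
  simp only [wronskian]
  linear_combination u t * hve - v t * hue

theorem hasDerivAt_modulus (hu : DifferentiableAt ℝ u t) (hv : DifferentiableAt ℝ v t) :
    HasDerivAt (modulus u v) (2 * modulusHalfDeriv u v t) t := by
  refine ((hu.hasDerivAt.pow 2).add (hv.hasDerivAt.pow 2)).congr_deriv ?_
  simp only [modulusHalfDeriv]
  ring

theorem hasDerivAt_modulusHalfDeriv
    (hu : DifferentiableAt ℝ u t) (hu' : DifferentiableAt ℝ (deriv u) t)
    (hv : DifferentiableAt ℝ v t) (hv' : DifferentiableAt ℝ (deriv v) t)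
    (hue : deriv (deriv u) t + p t * deriv u t + q t * u t = 0)
    (hve : deriv (deriv v) t + p t * deriv v t + q t * v t = 0) :
    HasDerivAt (modulusHalfDeriv u v)
      (deriv u t ^ 2 + deriv v t ^ 2 - p t * modulusHalfDeriv u v t - q t * modulus u v t) t := by
  refine ((hu.hasDerivAt.mul hu'.hasDerivAt).add
    (hv.hasDerivAt.mul hv'.hasDerivAt)).congr_deriv ?_
  simp only [modulusHalfDeriv, modulus]
  linear_combination u t * hue + v t * hve

theorem hasDerivAt_wronskian_div_modulus
    (hu : DifferentiableAt ℝ u t) (hu' : DifferentiableAt ℝ (deriv u) t)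
    (hv : DifferentiableAt ℝ v t) (hv' : DifferentiableAt ℝ (deriv v) t)
    (hue : deriv (deriv u) t + p t * deriv u t + q t * u t = 0)
    (hve : deriv (deriv v) t + p t * deriv v t + q t * v t = 0)
    (hm : modulus u v t ≠ 0) :
    HasDerivAt (wronskian u v / modulus u v)
      ((wronskian u v / modulus u v) t
        * (-p t - 2 * modulusHalfDeriv u v t / modulus u v t)) t := by
  refine ((hasDerivAt_wronskian hu hu' hv hv' hue hve).div
    (hasDerivAt_modulus hu hv) hm).congr_deriv ?_
  simp only [Pi.div_apply]
  field_simp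

end SecondOrderODE

theorem stmt_4_general (a b : ℝ) (p q u v : ℝ → ℝ)
    (hp : ContDiffOn ℝ 1 p (Ioo a b))
    (hu : ∀ t ∈ Ioo a b, DifferentiableAt ℝ u t)
    (hu' : ∀ t ∈ Ioo a b, DifferentiableAt ℝ (deriv u) t)
    (hv : ∀ t ∈ Ioo a b, DifferentiableAt ℝ v t)
    (hv' : ∀ t ∈ Ioo a b, DifferentiableAt ℝ (deriv v) t)
    (hue : ∀ t ∈ Ioo a b, deriv (deriv u) t + p t * deriv u t + q t * u t = 0)
    (hve : ∀ t ∈ Ioo a b, deriv (deriv v) t + p t * deriv v t + q t * v t = 0)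
    (hω : ∀ t ∈ Ioo a b, u t * deriv v t - deriv u t * v t ≠ 0)
    (hm : ∀ t ∈ Ioo a b, (u t) ^ 2 + (v t) ^ 2 ≠ 0)
    (α' : ℝ → ℝ)
    (hα' : α' = fun t => (u t * deriv v t - deriv u t * v t) / ((u t) ^ 2 + (v t) ^ 2)) :
    ∀ t ∈ Ioo a b,
      (DifferentiableAt ℝ α' t ∧ DifferentiableAt ℝ (deriv α') t) ∧
      q t - (p t) ^ 2 / 4 - deriv p t / 2 - (α' t) ^ 2
        + 3 / 4 * (deriv α' t / α' t) ^ 2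
        - deriv (deriv α') t / (2 * α' t) = 0 := by
  intro t ht
  replace hα' : α' = wronskian u v / modulus u v := hα'
  subst hα'
  have hα'_deriv : ∀ x ∈ Ioo a b, HasDerivAt (wronskian u v / modulus u v)
      ((wronskian u v / modulus u v) x
        * (-p x - 2 * modulusHalfDeriv u v x / modulus u v x)) x := fun x hx =>
    hasDerivAt_wronskian_div_modulus (hu x hx) (hu' x hx) (hv x hx) (hv' x hx)
      (hue x hx) (hve x hx) (hm x hx)
  have hp_deriv : HasDerivAt p (deriv p t) t :=
    ((hp.differentiableOn one_ne_zero).differentiableAt (isOpen_Ioo.mem_nhds ht)).hasDerivAt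
  have hL := hp_deriv.neg.sub
    (((hasDerivAt_modulusHalfDeriv (hu t ht) (hu' t ht) (hv t ht) (hv' t ht) (hue t ht)
      (hve t ht)).const_mul 2).div (hasDerivAt_modulus (hu t ht) (hv t ht)) (hm t ht))
  have hα'' := hasDerivAt_deriv_of_eventually_hasDerivAt_mul
    (eventually_of_mem (isOpen_Ioo.mem_nhds ht) hα'_deriv) hL
  refine ⟨⟨(hα'_deriv t ht).differentiableAt, hα''.differentiableAt⟩, ?_⟩
  rw [(hα'_deriv t ht).deriv, hα''.deriv]
  have hωt := hω t ht
  have hmt := hm t ht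
  simp only [Pi.div_apply, wronskian, modulus, modulusHalfDeriv] at hωt hmt ⊢
  field_simp
  ring

/-- If `u`, `v` are solutions of `y'' + p y' + q y = 0` on `(a,b)` (with
`p`, `q` continuously differentiable) whose Wronskian `ω = u v' - u' v` and modulus
function `m = u² + v²` are nonvanishing on `(a,b)`, then `α' = ω / (u² + v²)` is twice
differentiable and satisfies Kummer's equation on `(a,b)`. -/
theorem stmt_4 (a b : ℝ) (p q u v : ℝ → ℝ)
    (hp : ContDiffOn ℝ 1 p (Ioo a b))
    (hq : ContDiffOn ℝ 1 q (Ioo a b))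
    (hu : ∀ t ∈ Ioo a b, DifferentiableAt ℝ u t)
    (hu' : ∀ t ∈ Ioo a b, DifferentiableAt ℝ (deriv u) t)
    (hv : ∀ t ∈ Ioo a b, DifferentiableAt ℝ v t)
    (hv' : ∀ t ∈ Ioo a b, DifferentiableAt ℝ (deriv v) t)
    (hue : ∀ t ∈ Ioo a b, deriv (deriv u) t + p t * deriv u t + q t * u t = 0)
    (hve : ∀ t ∈ Ioo a b, deriv (deriv v) t + p t * deriv v t + q t * v t = 0)
    (hω : ∀ t ∈ Ioo a b, u t * deriv v t - deriv u t * v t ≠ 0)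
    (hm : ∀ t ∈ Ioo a b, (u t) ^ 2 + (v t) ^ 2 ≠ 0)
    (α' : ℝ → ℝ)
    (hα' : α' = fun t => (u t * deriv v t - deriv u t * v t) / ((u t) ^ 2 + (v t) ^ 2)) :
    ∀ t ∈ Ioo a b,
      (DifferentiableAt ℝ α' t ∧ DifferentiableAt ℝ (deriv α') t) ∧
      q t - (p t) ^ 2 / 4 - deriv p t / 2 - (α' t) ^ 2
        + 3 / 4 * (deriv α' t / α' t) ^ 2
        - deriv (deriv α') t / (2 * α' t) = 0 :=
  stmt_4_general a b p q u v hp hu hu' hv hv' hue hve hω hm α' hα'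
end
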